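/- arXiv:1402.0686 — 2 statements merged into one kernel-verified Lean document; each statement's English description precedes it below -/
import Mathlib

section
/- For an integrable random vector X in ℝ^d and θ ∈ [1/2, 1), the expectile function e_θ(u) (the θ-expectile of uᵀX) is subadditive: e_θ(u₁ + u₂) ≤ e_θ(u₁) + e_θ(u₂) for all u₁, u₂ ∈ ℝ^d. -/
/-!
Since `(Y - y)⁺ - (y - Y)⁺ = Y - y`, a `θ`-expectile `y` of `Y` is a zero of
`g_Y(y) = (2θ - 1) E[(Y - y)⁺] + (1 - θ) (E Y - y)`. For `1/2 ≤ θ < 1` this function is strictly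
decreasing in `y`, and `(a + b)⁺ ≤ a⁺ + b⁺` gives `g_{Y₁+Y₂}(y₁ + y₂) ≤ g_{Y₁}(y₁) + g_{Y₂}(y₂)`.
Hence `g_{Y₁+Y₂}(y₁ + y₂) ≤ 0 = g_{Y₁+Y₂}(y₁₂)`, which forces `y₁₂ ≤ y₁ + y₂`.
-/

open MeasureTheory

/-- `y` is a `θ`-expectile of `Y`. -/
def IsExpectile {Ω : Type*} [MeasureSpace Ω] (θ : ℝ) (Y : Ω → ℝ) (y : ℝ) : Prop :=
  θ * ∫ ω, max (Y ω - y) 0 = (1 - θ) * ∫ ω, max (y - Y ω) 0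

section Expectile

variable {Ω : Type*} [MeasureSpace Ω]

lemma integral_max_sub_add_sub_zero_le [IsFiniteMeasure (volume : Measure Ω)] {Y₁ Y₂ : Ω → ℝ}
    (hY₁ : Integrable Y₁) (hY₂ : Integrable Y₂) (y₁ y₂ : ℝ) :
    ∫ ω, max (Y₁ ω + Y₂ ω - (y₁ + y₂)) 0 ≤
      (∫ ω, max (Y₁ ω - y₁) 0) + ∫ ω, max (Y₂ ω - y₂) 0 := by
  have hp₁ : Integrable fun ω => max (Y₁ ω - y₁) 0 := (hY₁.sub (integrable_const y₁)).pos_part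
  have hp₂ : Integrable fun ω => max (Y₂ ω - y₂) 0 := (hY₂.sub (integrable_const y₂)).pos_part
  rw [← integral_add hp₁ hp₂]
  refine integral_mono ((hY₁.add hY₂).sub (integrable_const _)).pos_part (hp₁.add hp₂)
    fun ω => ?_
  simpa [add_sub_add_comm] using
    max_add_add_le_max_add_max (a := Y₁ ω - y₁) (b := Y₂ ω - y₂) (c := 0) (d := 0)

lemma integral_max_sub_zero_antitone [IsFiniteMeasure (volume : Measure Ω)] {Y : Ω → ℝ}
    (hY : Integrable Y) : Antitone fun y => ∫ ω, max (Y ω - y) 0 :=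
  fun _ _ hy => integral_mono (hY.sub (integrable_const _)).pos_part
    (hY.sub (integrable_const _)).pos_part fun _ => max_le_max (by linarith) le_rfl

variable [IsProbabilityMeasure (volume : Measure Ω)]

lemma integral_max_sub_zero_sub_integral_max_sub_zero {Y : Ω → ℝ} (hY : Integrable Y)
    (y : ℝ) : (∫ ω, max (Y ω - y) 0) - ∫ ω, max (y - Y ω) 0 = (∫ ω, Y ω) - y := by
  have hpos : Integrable fun ω => max (Y ω - y) 0 := (hY.sub (integrable_const y)).pos_part
  have hneg : Integrable fun ω => max (y - Y ω) 0 := ((integrable_const y).sub hY).pos_part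
  rw [← integral_sub hpos hneg]
  have hpart : ∀ ω, max (Y ω - y) 0 - max (y - Y ω) 0 = Y ω - y := fun ω => by
    simpa [neg_sub] using max_zero_sub_max_neg_zero_eq_self (Y ω - y)
  simp only [hpart]
  rw [integral_sub hY (integrable_const y), integral_const, probReal_univ, one_smul]

lemma IsExpectile.score_eq_zero {θ : ℝ} {Y : Ω → ℝ} {y : ℝ} (hY : Integrable Y)
    (h : IsExpectile θ Y y) :
    (2 * θ - 1) * (∫ ω, max (Y ω - y) 0) + (1 - θ) * ((∫ ω, Y ω) - y) = 0 := by
  unfold IsExpectile at h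
  linear_combination h + (θ - 1) * integral_max_sub_zero_sub_integral_max_sub_zero hY y

theorem IsExpectile.le_add {θ : ℝ} (hθ : θ ∈ Set.Ico (1 / 2 : ℝ) 1) {Y₁ Y₂ : Ω → ℝ}
    (hY₁ : Integrable Y₁) (hY₂ : Integrable Y₂) {y₁ y₂ y₁₂ : ℝ}
    (h₁ : IsExpectile θ Y₁ y₁) (h₂ : IsExpectile θ Y₂ y₂)
    (h₁₂ : IsExpectile θ (Y₁ + Y₂) y₁₂) : y₁₂ ≤ y₁ + y₂ := by
  have hweight : 0 ≤ 2 * θ - 1 := by linarith [hθ.1]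
  have hslope : 0 < 1 - θ := by linarith [hθ.2]
  have hY := hY₁.add hY₂
  have hscore₁ := h₁.score_eq_zero hY₁
  have hscore₂ := h₂.score_eq_zero hY₂
  have hscore₁₂ := h₁₂.score_eq_zero hY
  simp only [Pi.add_apply, integral_add hY₁ hY₂] at hscore₁₂
  have hsub := integral_max_sub_add_sub_zero_le hY₁ hY₂ y₁ y₂
  by_contra! hlt
  have hanti := integral_max_sub_zero_antitone hY hlt.le
  simp only [Pi.add_apply] at hanti
  linarith [mul_le_mul_of_nonneg_left hsub hweight, mul_le_mul_of_nonneg_left hanti hweight,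
    mul_lt_mul_of_pos_left hlt hslope]

end Expectile

/-- Subadditivity of the expectile function for `θ ∈ [1/2, 1)`:
`e_θ(u₁ + u₂) ≤ e_θ(u₁) + e_θ(u₂)`. -/
theorem expectile_subadditive {Ω : Type*} [MeasureSpace Ω]
    [IsProbabilityMeasure (volume : Measure Ω)] {d : ℕ}
    (X : Ω → Fin d → ℝ) (hint : ∀ i, Integrable fun ω => X ω i)
    (θ : ℝ) (hθ : θ ∈ Set.Ico (1 / 2 : ℝ) 1)
    (u₁ u₂ : Fin d → ℝ) (y₁ y₂ y₁₂ : ℝ)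
    (h₁ : IsExpectile θ (fun ω => ∑ i, u₁ i * X ω i) y₁)
    (h₂ : IsExpectile θ (fun ω => ∑ i, u₂ i * X ω i) y₂)
    (h₁₂ : IsExpectile θ (fun ω => ∑ i, (u₁ + u₂) i * X ω i) y₁₂) :
    y₁₂ ≤ y₁ + y₂ := by
  have hproj : ∀ u : Fin d → ℝ, Integrable fun ω => ∑ i, u i * X ω i := fun u =>
    integrable_finsetSum _ fun i _ => (hint i).const_mul _
  have hsum : (fun ω => ∑ i, (u₁ + u₂) i * X ω i) =
      (fun ω => ∑ i, u₁ i * X ω i) + fun ω => ∑ i, u₂ i * X ω i := by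
    funext ω
    simp only [Pi.add_apply, add_mul, Finset.sum_add_distrib]
  rw [hsum] at h₁₂
  exact h₁.le_add hθ (hproj u₁) (hproj u₂) h₂ h₁₂
end

section
/- If X in ℝ^d is angularly symmetric about η and for every nonzero u the variable uᵀX has a continuous distribution, then the half-space depth of η with respect to X equals 1/2, i.e. HD_X(η) = inf_{‖u‖=1} P(uᵀX ≤ uᵀη) = 1/2, and η maximizes the half-space depth. -/
/-!
Angular symmetry makes the open half-spaces `{uᵀ(y - η) < 0}` and `{uᵀ(y - η) > 0}` equally
likely, since `dir (y - η)` is a positive multiple of `y - η`. As the hyperplane between them is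
null, every closed half-space with `η` on its boundary has mass exactly `1/2`. Conversely, for any
`x` and any direction `u`, the half-spaces `{uᵀy ≤ uᵀx}` and `{uᵀy ≥ uᵀx}` have total mass `1`,
so one of them, hence the depth of `x`, is at most `1/2`.
-/

open MeasureTheory

/-- Half-space depth. -/
noncomputable def HD {d : ℕ} (μ : Measure (Fin d → ℝ)) (x : Fin d → ℝ) : ℝ :=
  ⨅ u : {u : Fin d → ℝ // ∑ i, (u i) ^ 2 = 1},
    (μ {y | ∑ i, u.1 i * y i ≤ ∑ i, u.1 i * x i}).toReal

/-- Euclidean-normalized direction of a vector in `ℝ^d`. -/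
noncomputable def dir {d : ℕ} (v : Fin d → ℝ) : Fin d → ℝ :=
  (Real.sqrt (∑ i, (v i) ^ 2))⁻¹ • v

lemma Function.nonempty_of_nontrivial (α β : Type*) [Nontrivial (α → β)] : Nonempty α := by
  obtain ⟨f, g, hfg⟩ := exists_pair_ne (α → β)
  exact ⟨(Function.ne_iff.mp hfg).choose⟩

section LevelSets

variable {α : Type*} [MeasurableSpace α] {μ : Measure α} {f : α → ℝ} {t : ℝ}

lemma measure_le_eq_measure_lt_of_null (h : μ {x | f x = t} = 0) :
    μ {x | f x ≤ t} = μ {x | f x < t} := by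
  rw [← measure_sdiff_null h]
  congr 1
  ext x
  simp [lt_iff_le_and_ne]

lemma measure_ge_eq_measure_gt_of_null (h : μ {x | f x = t} = 0) :
    μ {x | t ≤ f x} = μ {x | t < f x} := by
  simpa using measure_le_eq_measure_lt_of_null (f := fun x => -f x) (t := -t) (by simpa using h)

variable [IsProbabilityMeasure μ]

lemma toReal_measure_le_add_toReal_measure_ge_of_null (hf : Measurable f)
    (h : μ {x | f x = t} = 0) : (μ {x | f x ≤ t}).toReal + (μ {x | t ≤ f x}).toReal = 1 := by
  have hcompl : {x | f x ≤ t}ᶜ = {x | t < f x} := by ext x; simp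
  rw [← ENNReal.toReal_add (measure_ne_top _ _) (measure_ne_top _ _),
    measure_ge_eq_measure_gt_of_null h, ← hcompl,
    measure_add_measure_compl (measurableSet_le hf measurable_const), measure_univ,
    ENNReal.toReal_one]

lemma toReal_measure_nonpos_eq_half (hf : Measurable f) (h : μ {x | f x = 0} = 0)
    (hsymm : μ {x | f x < 0} = μ {x | 0 < f x}) : (μ {x | f x ≤ 0}).toReal = 1 / 2 := by
  have hsum := toReal_measure_le_add_toReal_measure_ge_of_null hf h
  rw [measure_ge_eq_measure_gt_of_null h, ← hsymm, ← measure_le_eq_measure_lt_of_null h] at hsum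
  linarith

lemma nontrivial_of_measure_singleton_eq_zero {x : α} (h : μ {x} = 0) : Nontrivial α := by
  by_contra hα
  rw [not_nontrivial_iff_subsingleton] at hα
  rw [Subsingleton.eq_univ_of_nonempty (Set.singleton_nonempty x), measure_univ] at h
  exact one_ne_zero h

end LevelSets

section Directions

variable {d : ℕ}

lemma ne_zero_of_sum_sq_eq_one {u : Fin d → ℝ} (hu : ∑ i, u i ^ 2 = 1) : u ≠ 0 := by
  rintro rfl
  simp at hu


instance [h : Nonempty (Fin d)] : Nonempty {u : Fin d → ℝ // ∑ i, u i ^ 2 = 1} :=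
  h.map fun i => ⟨Pi.single i 1, by simp [sq, Pi.single_apply]⟩

lemma measurable_dir : Measurable (dir : (Fin d → ℝ) → Fin d → ℝ) := by
  unfold dir
  fun_prop

lemma exists_pos_smul_eq_dir (v : Fin d → ℝ) : ∃ c : ℝ, 0 < c ∧ dir v = c • v := by
  rcases eq_or_ne v 0 with rfl | hv
  · exact ⟨1, one_pos, by simp [dir]⟩
  obtain ⟨i, hi⟩ := Function.ne_iff.mp hv
  have hpos : 0 < ∑ j, v j ^ 2 :=
    Finset.sum_pos' (fun j _ => sq_nonneg (v j)) ⟨i, Finset.mem_univ i, sq_pos_of_ne_zero hi⟩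
  exact ⟨_, inv_pos.mpr (Real.sqrt_pos.mpr hpos), rfl⟩

lemma dotProduct_dir_neg_iff (u v : Fin d → ℝ) : u ⬝ᵥ dir v < 0 ↔ u ⬝ᵥ v < 0 := by
  obtain ⟨c, hc, h⟩ := exists_pos_smul_eq_dir v
  rw [h, dotProduct_smul, smul_neg_iff_of_pos_left hc]

lemma dotProduct_neg_dir_neg_iff (u v : Fin d → ℝ) : u ⬝ᵥ -dir v < 0 ↔ 0 < u ⬝ᵥ v := by
  obtain ⟨c, hc, h⟩ := exists_pos_smul_eq_dir v
  rw [h, dotProduct_neg, neg_lt_zero, dotProduct_smul, smul_pos_iff_of_pos_left hc]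

end Directions

section HalfSpaceDepth

variable {d : ℕ} {μ : Measure (Fin d → ℝ)}

lemma measure_dotProduct_neg_eq_measure_dotProduct_pos {η : Fin d → ℝ}
    (hsym : μ.map (fun y => dir (y - η)) = μ.map (fun y => -dir (y - η))) (u : Fin d → ℝ) :
    μ {y | u ⬝ᵥ (y - η) < 0} = μ {y | 0 < u ⬝ᵥ (y - η)} := by
  have hS : MeasurableSet {z : Fin d → ℝ | u ⬝ᵥ z < 0} :=
    measurableSet_lt (by fun_prop) measurable_const
  have hmeas : Measurable fun y : Fin d → ℝ => dir (y - η) := measurable_dir.comp (by fun_prop)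
  have hneg : (fun y => dir (y - η)) ⁻¹' {z | u ⬝ᵥ z < 0} = {y | u ⬝ᵥ (y - η) < 0} := by
    ext y
    exact dotProduct_dir_neg_iff u (y - η)
  have hpos : (fun y => -dir (y - η)) ⁻¹' {z | u ⬝ᵥ z < 0} = {y | 0 < u ⬝ᵥ (y - η)} := by
    ext y
    exact dotProduct_neg_dir_neg_iff u (y - η)
  have h := congrArg (fun ν : Measure (Fin d → ℝ) => ν {z | u ⬝ᵥ z < 0}) hsym
  rwa [Measure.map_apply hmeas hS, Measure.map_apply (f := fun y => -dir (y - η)) hmeas.neg hS,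
    hneg, hpos] at h

lemma HD_le (x : Fin d → ℝ) (u : {u : Fin d → ℝ // ∑ i, (u i) ^ 2 = 1}) :
    HD μ x ≤ (μ {y | ∑ i, u.1 i * y i ≤ ∑ i, u.1 i * x i}).toReal :=
  ciInf_le ⟨0, by rintro r ⟨u, rfl⟩; exact ENNReal.toReal_nonneg⟩ u

variable [IsProbabilityMeasure μ]

lemma HD_le_half [Nonempty (Fin d)]
    (hcont : ∀ u : Fin d → ℝ, u ≠ 0 → ∀ t : ℝ, μ {y | ∑ i, u i * y i = t} = 0)
    (x : Fin d → ℝ) : HD μ x ≤ 1 / 2 := by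
  obtain ⟨u, hu⟩ := Classical.arbitrary {u : Fin d → ℝ // ∑ i, u i ^ 2 = 1}
  have hsum := toReal_measure_le_add_toReal_measure_ge_of_null (μ := μ)
    (f := fun y => ∑ j, u j * y j) (t := ∑ j, u j * x j) (by fun_prop)
    (hcont u (ne_zero_of_sum_sq_eq_one hu) _)
  have hneg : {y : Fin d → ℝ | ∑ j, (-u) j * y j ≤ ∑ j, (-u) j * x j}
      = {y | ∑ j, u j * x j ≤ ∑ j, u j * y j} := by
    ext y
    simp
  rcases le_or_gt (μ {y | ∑ j, u j * y j ≤ ∑ j, u j * x j}).toReal (1 / 2) with h | h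
  · exact (HD_le x ⟨u, hu⟩).trans h
  · calc HD μ x ≤ _ := HD_le x ⟨-u, by simpa using hu⟩
      _ ≤ 1 / 2 := by rw [hneg]; linarith

lemma toReal_measure_halfspace_eq_half {η u : Fin d → ℝ}
    (hsym : μ.map (fun y => dir (y - η)) = μ.map (fun y => -dir (y - η)))
    (hnull : μ {y | ∑ i, u i * y i = ∑ i, u i * η i} = 0) :
    (μ {y | ∑ i, u i * y i ≤ ∑ i, u i * η i}).toReal = 1 / 2 := by
  have hnull' : μ {y | u ⬝ᵥ (y - η) = 0} = 0 := by
    simp_rw [dotProduct_sub, sub_eq_zero]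
    exact hnull
  have h := toReal_measure_nonpos_eq_half (by fun_prop) hnull'
    (measure_dotProduct_neg_eq_measure_dotProduct_pos hsym u)
  simp_rw [dotProduct_sub, sub_nonpos] at h
  exact h

end HalfSpaceDepth

/-- If `X` (with law `μ`) is angularly symmetric about `η` and every non-trivial
projection `uᵀX` is atomless, then the half-space depth of `η` is `1/2`, and `η`
maximizes the half-space depth. -/
theorem angular_symmetry_depth_half {d : ℕ} (μ : Measure (Fin d → ℝ))
    [IsProbabilityMeasure μ] (η : Fin d → ℝ)
    (hcont : ∀ u : Fin d → ℝ, u ≠ 0 → ∀ t : ℝ, μ {y | ∑ i, u i * y i = t} = 0)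
    (hne : μ {η} = 0)
    (hsym : μ.map (fun y => dir (y - η)) = μ.map (fun y => -dir (y - η))) :
    HD μ η = 1 / 2 ∧ ∀ x : Fin d → ℝ, HD μ x ≤ HD μ η := by
  -- `μ {η} = 0` rules out `d = 0`, where `HD` is an empty infimum with junk value `0`.
  have := nontrivial_of_measure_singleton_eq_zero hne
  have := Function.nonempty_of_nontrivial (Fin d) ℝ
  have hHD : HD μ η = 1 / 2 := by
    have half : ∀ u : {u : Fin d → ℝ // ∑ i, (u i) ^ 2 = 1},
        (μ {y | ∑ i, u.1 i * y i ≤ ∑ i, u.1 i * η i}).toReal = 1 / 2 := fun u =>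
      toReal_measure_halfspace_eq_half hsym (hcont _ (ne_zero_of_sum_sq_eq_one u.2) _)
    simp only [HD, half, ciInf_const]
  exact ⟨hHD, fun x => hHD ▸ HD_le_half hcont x⟩
end
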